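/- There is an order-preserving bijection φ between the poset 𝔍'_n underlying the collapsed multiplihedron J'_n and the poset 𝔓(n+1) of bracketings of a word with n+1 letters; consequently, the collapsed multiplihedron J'_n is combinatorially isomorphic to the associahedron K_{n+1}. -/

import Mathlib

/-- Planar rooted trees (associations of a word: each internal node is a
bracketed product of its children). -/
inductive WT : Type
  | lf : WT
  | nd : List WT → WT

/-- Number of leaves (letters). -/
def WT.leaves : WT → ℕ
  | .lf => 1
  | .nd l => (l.attach.map (fun x => WT.leaves x.1)).sum
decreasing_by
  have := List.sizeOf_lt_of_mem x.2
  simp only [WT.nd.sizeOf_spec]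
  omega

/-- A valid association: every internal node has at least two children
(no redundant brackets). -/
def WT.valid : WT → Prop
  | .lf => True
  | .nd l => 2 ≤ l.length ∧ ∀ t ∈ l, t.valid
decreasing_by
  have := List.sizeOf_lt_of_mem ‹t ∈ l›
  simp only [WT.nd.sizeOf_spec]
  omega

/-- `WAdd t t'` : the association `t` is obtained from `t'` by adding one
(non-redundant) pair of brackets around at least two consecutive factors;
equivalently, `t'` is obtained from `t` by collapsing one internal edge. -/
inductive WAdd : WT → WT → Prop
  | here (l₁ m l₂ : List WT) (hm : 2 ≤ m.length) (h : 1 ≤ l₁.length + l₂.length) :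
      WAdd (.nd (l₁ ++ [.nd m] ++ l₂)) (.nd (l₁ ++ m ++ l₂))
  | under (l₁ l₂ : List WT) {a b : WT} (h : WAdd a b) :
      WAdd (.nd (l₁ ++ [a] ++ l₂)) (.nd (l₁ ++ [b] ++ l₂))
/-- Two parenthesis pairs, encoded as intervals `(a, b)` of letter positions,
are compatible if they are disjoint or nested. -/
def Compat (p q : ℕ × ℕ) : Prop :=
  p.2 < q.1 ∨ q.2 < p.1 ∨ (p.1 ≤ q.1 ∧ q.2 ≤ p.2) ∨ (q.1 ≤ p.1 ∧ p.2 ≤ q.2)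

/-- A (possibly partial) bracketing of a word with `n` letters: a set of
parenthesis pairs, each encoded as an interval `(a, b)` with `1 ≤ a < b ≤ n`
enclosing the consecutive block `x_a ... x_b` (so of length at least `2`), the
trivial pair `(1, n)` enclosing the whole word being excluded, such that any two
pairs are nested or disjoint. -/
def IsBracketing (n : ℕ) (S : Finset (ℕ × ℕ)) : Prop :=
  (∀ p ∈ S, 1 ≤ p.1 ∧ p.1 < p.2 ∧ p.2 ≤ n ∧ ¬(p.1 = 1 ∧ p.2 = n)) ∧
  ∀ p ∈ S, ∀ q ∈ S, Compat p q

/-- The bracketings of a word with `n` letters. -/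
def Bracketing (n : ℕ) : Type := {S : Finset (ℕ × ℕ) // IsBracketing n S}


/-- An element of the poset `𝔍'_n` underlying the collapsed multiplihedron: a
list of `f`-factors (type I / II / degenerate type III: since the codomain is
strictly associative there is no codomain bracketing, so the expression is just
a product `f(...)f(...)...f(...)`), each factor being a list of blocks separated
by the painted-product symbol `·`, each block an association of consecutive
letters. -/
abbrev JE : Type := List (List WT)

/-- Validity: at least one `f`-factor, each factor applied to at least one
block, all blocks valid associations. -/
def JE.valid (L : JE) : Prop :=
  L ≠ [] ∧ ∀ bl ∈ L, bl ≠ [] ∧ ∀ t ∈ bl, t.valid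

/-- Total number of letters. -/
def JE.letters (L : JE) : ℕ := (L.map (fun bl => (bl.map WT.leaves).sum)).sum

/-- `JEOp P' P` : `P` is obtained from `P'` by one of the generating moves of
`𝔍'_n` (so `P ≺ P'`): adding a bracket pair in the domain, replacing `·` by
`)f(`, or removing consecutive `·`s by adding an enclosing bracket pair. -/
inductive JEOp : JE → JE → Prop
  | domBracket (A B : JE) (u v : List WT) {t t' : WT} (h : WAdd t' t) :
      JEOp (A ++ [u ++ [t] ++ v] ++ B) (A ++ [u ++ [t'] ++ v] ++ B)
  | dotToF (A B : JE) (xs ys : List WT) (hx : xs ≠ []) (hy : ys ≠ []) :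
      JEOp (A ++ [xs ++ ys] ++ B) (A ++ [xs, ys] ++ B)
  | remDots (A B : JE) (u m v : List WT) (hm : 2 ≤ m.length) :
      JEOp (A ++ [u ++ m ++ v] ++ B) (A ++ [u ++ [WT.nd m] ++ v] ++ B)

/-- The order on `𝔍'_n`: `P ≤ P'` iff `P` is obtained from `P'` by a sequence
of generating moves. -/
def JE.Le (P P' : JE) : Prop := Relation.ReflTransGen JEOp P' P

section AuxCollapsed

def sL (l : List WT) : ℕ := (l.map WT.leaves).sum

theorem WT.leaves_nd (l : List WT) : (WT.nd l).leaves = sL l := by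
  rw [WT.leaves, sL, List.attach_map_val]

theorem sL_append (x y : List WT) : sL (x ++ y) = sL x + sL y := by
  simp [sL]

theorem sL_cons (t : WT) (ts : List WT) : sL (t :: ts) = t.leaves + sL ts := by
  simp [sL]

mutual
def WT.ivs : WT → ℕ → List (ℕ × ℕ)
  | .lf, _ => []
  | .nd l, s => (s, s + sL l - 1) :: ivsL l s

def ivsL : List WT → ℕ → List (ℕ × ℕ)
  | [], _ => []
  | t :: ts, s => WT.ivs t s ++ ivsL ts (s + t.leaves)
end

theorem ivs_lf (s : ℕ) : WT.ivs .lf s = [] := by rw [WT.ivs]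
theorem ivs_nd (l : List WT) (s : ℕ) :
    WT.ivs (.nd l) s = (s, s + sL l - 1) :: ivsL l s := by rw [WT.ivs]
theorem ivsL_nil (s : ℕ) : ivsL [] s = [] := by rw [ivsL]
theorem ivsL_cons (t : WT) (ts : List WT) (s : ℕ) :
    ivsL (t :: ts) s = WT.ivs t s ++ ivsL ts (s + t.leaves) := by rw [ivsL]

theorem ivsL_append (x y : List WT) (s : ℕ) :
    ivsL (x ++ y) s = ivsL x s ++ ivsL y (s + sL x) := by
  induction x generalizing s with
  | nil => simp [ivsL_nil, sL]
  | cons t ts ih => simp [ivsL_cons, ih, sL_cons, List.append_assoc, Nat.add_assoc]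

theorem leaves_pos : ∀ t : WT, t.valid → 1 ≤ t.leaves := by
  have key : ∀ N t, sizeOf t ≤ N → WT.valid t → 1 ≤ WT.leaves t := by
    intro N
    induction N with
    | zero => intro t h _; cases t <;> simp_all
    | succ N ih =>
      intro t hs hv
      cases t with
      | lf => simp [WT.leaves]
      | nd l =>
        rw [WT.leaves_nd]
        rw [WT.valid] at hv
        obtain ⟨hlen, hall⟩ := hv
        match l, hlen, hall with
        | a :: r, _, hall =>
          have hsz : sizeOf a ≤ N := by
            simp only [WT.nd.sizeOf_spec, List.cons.sizeOf_spec] at hs; omega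
          have := ih a hsz (hall a (by simp))
          rw [sL_cons]
          omega
  exact fun t => key (sizeOf t) t le_rfl

theorem sL_pos (l : List WT) (h : ∀ t ∈ l, t.valid) (hne : l ≠ []) : 1 ≤ sL l := by
  match l, hne with
  | a :: r, _ =>
    have := leaves_pos a (h a (by simp))
    rw [sL_cons]; omega

theorem sL_ge2 (l : List WT) (h : ∀ t ∈ l, t.valid) (hlen : 2 ≤ l.length) : 2 ≤ sL l := by
  match l, hlen with
  | a :: b :: r, _ =>
    have ha := leaves_pos a (h a (by simp))
    have hb := leaves_pos b (h b (by simp))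
    rw [sL_cons, sL_cons]; omega

theorem ivsL_bounds : ∀ (l : List WT), (∀ t ∈ l, t.valid) → ∀ s p, p ∈ ivsL l s →
    s ≤ p.1 ∧ p.1 < p.2 ∧ p.2 + 1 ≤ s + sL l := by
  have key : ∀ N (l : List WT), sizeOf l ≤ N → (∀ t ∈ l, t.valid) → ∀ s p, p ∈ ivsL l s →
      s ≤ p.1 ∧ p.1 < p.2 ∧ p.2 + 1 ≤ s + sL l := by
    intro N
    induction N with
    | zero => intro l h _; cases l <;> simp_all
    | succ N ih =>
      intro l hs hv s p hp
      match l with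
      | [] => rw [ivsL_nil] at hp; simp at hp
      | t :: ts =>
        rw [ivsL_cons, List.mem_append] at hp
        have hts : ∀ u ∈ ts, u.valid := fun u hu => hv u (by simp [hu])
        have hszts : sizeOf ts ≤ N := by
          simp only [List.cons.sizeOf_spec] at hs; omega
        rcases hp with hp | hp
        · cases t with
          | lf => rw [ivs_lf] at hp; simp at hp
          | nd m =>
            have hvm := hv (.nd m) (by simp)
            rw [WT.valid] at hvm
            obtain ⟨hlen, hall⟩ := hvm
            have h2 := sL_ge2 m hall hlen
            rw [ivs_nd] at hp
            rcases List.mem_cons.1 hp with hp | hp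
            · subst hp
              refine ⟨le_rfl, by omega, ?_⟩
              rw [sL_cons, WT.leaves_nd]
              omega
            · have hszm : sizeOf m ≤ N := by
                simp only [List.cons.sizeOf_spec, WT.nd.sizeOf_spec] at hs; omega
              have := ih m hszm hall s p hp
              rw [sL_cons, WT.leaves_nd]
              omega
        · have := ih ts hszts hts (s + t.leaves) p hp
          rw [sL_cons]
          omega
  exact fun l => key (sizeOf l) l le_rfl

/-- intervals of a list of ≥ 2 trees are never the full span -/
theorem ivsL_proper (l : List WT) (hv : ∀ t ∈ l, t.valid) (hlen : 2 ≤ l.length)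
    (s : ℕ) (p : ℕ × ℕ) (hp : p ∈ ivsL l s) : s + 1 ≤ p.1 ∨ p.2 + 1 < s + sL l := by
  match l, hlen with
  | t :: ts, hlen =>
    rw [ivsL_cons, List.mem_append] at hp
    have hts : ∀ u ∈ ts, u.valid := fun u hu => hv u (by simp [hu])
    have htsne : ts ≠ [] := by
      intro h; subst h; simp at hlen
    have h1 := sL_pos ts hts htsne
    rcases hp with hp | hp
    · right
      have hb : p.2 + 1 ≤ s + t.leaves := by
        have : p ∈ ivsL [t] s := by rw [ivsL_cons]; simp [hp]
        have h := ivsL_bounds [t] (by simpa using hv t (by simp)) s p this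
        rw [sL_cons, sL] at h
        simp at h
        omega
      rw [sL_cons]
      omega
    · left
      have := (ivsL_bounds ts hts (s + t.leaves) p hp).1
      have := leaves_pos t (hv t (by simp))
      omega

theorem ivsL_compat : ∀ (l : List WT), (∀ t ∈ l, t.valid) → ∀ s p q,
    p ∈ ivsL l s → q ∈ ivsL l s → Compat p q := by
  have key : ∀ N (l : List WT), sizeOf l ≤ N → (∀ t ∈ l, t.valid) → ∀ s p q,
      p ∈ ivsL l s → q ∈ ivsL l s → Compat p q := by
    intro N
    induction N with
    | zero => intro l h _; cases l <;> simp_all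
    | succ N ih =>
      intro l hs hv s p q hp hq
      match l with
      | [] => rw [ivsL_nil] at hp; simp at hp
      | t :: ts =>
        rw [ivsL_cons, List.mem_append] at hp hq
        have hts : ∀ u ∈ ts, u.valid := fun u hu => hv u (by simp [hu])
        have hszts : sizeOf ts ≤ N := by
          simp only [List.cons.sizeOf_spec] at hs; omega
        have htv : t.valid := hv t (by simp)
        have hone : ∀ r, r ∈ WT.ivs t s → s ≤ r.1 ∧ r.1 < r.2 ∧ r.2 + 1 ≤ s + t.leaves := by
          intro r hr
          have : r ∈ ivsL [t] s := by rw [ivsL_cons]; simp [hr]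
          have := ivsL_bounds [t] (by simpa using htv) s r this
          rw [sL_cons, sL] at this
          simpa using this
        rcases hp with hp | hp <;> rcases hq with hq | hq
        · -- both in ivs t s
          cases t with
          | lf => rw [ivs_lf] at hp; simp at hp
          | nd m =>
            have hvm := htv
            rw [WT.valid] at hvm
            obtain ⟨hlen, hall⟩ := hvm
            have hszm : sizeOf m ≤ N := by
              simp only [List.cons.sizeOf_spec, WT.nd.sizeOf_spec] at hs; omega
            have h2 := sL_ge2 m hall hlen
            rw [ivs_nd, List.mem_cons] at hp hq
            rcases hp with hp | hp <;> rcases hq with hq | hq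
            · subst hp; subst hq
              exact Or.inr (Or.inr (Or.inl ⟨le_rfl, le_rfl⟩))
            · subst hp
              have := ivsL_bounds m hall s q hq
              exact Or.inr (Or.inr (Or.inl ⟨by simpa using this.1, by simp; omega⟩))
            · subst hq
              have := ivsL_bounds m hall s p hp
              exact Or.inr (Or.inr (Or.inr ⟨by simpa using this.1, by simp; omega⟩))
            · exact ih m hszm hall s p q hp hq
        · -- p in t, q in ts
          have h1 := hone p hp
          have h2 := (ivsL_bounds ts hts (s + t.leaves) q hq).1
          exact Or.inl (by omega)
        · have h1 := hone q hq
          have h2 := (ivsL_bounds ts hts (s + t.leaves) p hp).1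
          exact Or.inr (Or.inl (by omega))
        · exact ih ts hszts hts (s + t.leaves) p q hp hq
  exact fun l => key (sizeOf l) l le_rfl

theorem WAdd_leaves_ivs {t' t : WT} (h : WAdd t' t) :
    t'.leaves = t.leaves ∧ ∀ s q, q ∈ WT.ivs t s → q ∈ WT.ivs t' s := by
  induction h with
  | here l₁ m l₂ hm h =>
    have hL : (WT.nd (l₁ ++ [WT.nd m] ++ l₂)).leaves = (WT.nd (l₁ ++ m ++ l₂)).leaves := by
      simp [WT.leaves_nd, sL_append, sL, WT.leaves_nd]
    refine ⟨hL, ?_⟩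
    intro s q hq
    rw [ivs_nd] at hq ⊢
    rw [List.mem_cons] at hq ⊢
    have hroot : sL (l₁ ++ [WT.nd m] ++ l₂) = sL (l₁ ++ m ++ l₂) := by
      simpa [WT.leaves_nd] using hL
    rcases hq with hq | hq
    · left; rw [hroot]; exact hq
    · right
      rw [ivsL_append, ivsL_append] at hq ⊢
      rw [List.mem_append, List.mem_append] at hq ⊢
      have e1 : sL [WT.nd m] = sL m := by simp [sL, WT.leaves_nd]
      rcases hq with (hq | hq) | hq
      · exact Or.inl (Or.inl hq)
      · rw [ivsL_cons, ivsL_nil, ivs_nd] at *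
        exact Or.inl (Or.inr (by simp [hq]))
      · refine Or.inr ?_
        have e2 : sL (l₁ ++ [WT.nd m]) = sL (l₁ ++ m) := by
          simp [sL_append, sL, WT.leaves_nd]
        rw [e2]; exact hq
  | under l₁ l₂ h ih =>
    obtain ⟨ihl, ihm⟩ := ih
    rename_i a b
    have hL : (WT.nd (l₁ ++ [a] ++ l₂)).leaves = (WT.nd (l₁ ++ [b] ++ l₂)).leaves := by
      simp [WT.leaves_nd, sL_append, sL, ihl]
    refine ⟨hL, ?_⟩
    intro s q hq
    rw [ivs_nd] at hq ⊢
    rw [List.mem_cons] at hq ⊢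
    have hroot : sL (l₁ ++ [a] ++ l₂) = sL (l₁ ++ [b] ++ l₂) := by
      simpa [WT.leaves_nd] using hL
    rcases hq with hq | hq
    · left; rw [hroot]; exact hq
    · right
      rw [ivsL_append, ivsL_append] at hq ⊢
      rw [List.mem_append, List.mem_append] at hq ⊢
      have e1 : sL [a] = sL [b] := by simp [sL, ihl]
      rw [ivsL_cons, ivsL_nil] at *
      rcases hq with (hq | hq) | hq
      · exact Or.inl (Or.inl hq)
      · simp only [List.append_nil] at hq ⊢
        exact Or.inl (Or.inr (ihm _ _ hq))
      · refine Or.inr ?_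
        have e2 : sL (l₁ ++ [a]) = sL (l₁ ++ [b]) := by
          simp [sL_append, sL, ihl]
        rw [e2]; exact hq

theorem WAdd_valid {t' t : WT} (h : WAdd t' t) (hv : t.valid) : t'.valid := by
  induction h with
  | here l₁ m l₂ hm h =>
    rw [WT.valid] at hv ⊢
    obtain ⟨hlen, hall⟩ := hv
    constructor
    · simp; omega
    · intro u hu
      simp only [List.mem_append, List.mem_singleton] at hu
      rcases hu with (hu | hu) | hu
      · exact hall u (by simp [hu])
      · subst hu
        rw [WT.valid]
        exact ⟨hm, fun v hv' => hall v (by simp [hv'])⟩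
      · exact hall u (by simp [hu])
  | under l₁ l₂ h ih =>
    rename_i a b
    rw [WT.valid] at hv ⊢
    obtain ⟨hlen, hall⟩ := hv
    constructor
    · simpa using hlen
    · intro u hu
      simp only [List.mem_append, List.mem_singleton] at hu
      rcases hu with (hu | hu) | hu
      · exact hall u (by simp [hu])
      · subst hu; exact ih (hall b (by simp))
      · exact hall u (by simp [hu])

theorem WAdd_cons {x y : List WT} (c : WT) (h : WAdd (.nd x) (.nd y)) :
    WAdd (.nd (c :: x)) (.nd (c :: y)) := by
  cases h with
  | here l₁ m l₂ hm hh =>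
    have := WAdd.here (c :: l₁) m l₂ hm (by simp; omega)
    simpa using this
  | under l₁ l₂ hh =>
    have := WAdd.under (c :: l₁) l₂ hh
    simpa using this

def jl : JE → List WT
  | [] => [.lf]
  | [bl] => bl ++ [.lf]
  | bl :: L => bl ++ [.nd (jl L)]

theorem jl_single (bl : List WT) : jl [bl] = bl ++ [.lf] := by rw [jl]

theorem jl_cons (bl : List WT) (L : JE) (h : L ≠ []) :
    jl (bl :: L) = bl ++ [.nd (jl L)] := by
  cases L with
  | nil => exact absurd rfl h
  | cons x L' => rfl

theorem JE.valid_tail {bl : List WT} {T : JE} (hv : JE.valid (bl :: T)) (h : T ≠ []) :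
    JE.valid T :=
  ⟨h, fun b hb => hv.2 b (List.mem_cons_of_mem _ hb)⟩

theorem letters_cons (bl : List WT) (T : JE) :
    JE.letters (bl :: T) = sL bl + T.letters := by
  simp [JE.letters, sL]

theorem jl_props : ∀ (L : JE), L.valid →
    (∀ t ∈ jl L, t.valid) ∧ 2 ≤ (jl L).length ∧ sL (jl L) = L.letters + 1 := by
  intro L
  induction L with
  | nil => intro hv; exact absurd rfl hv.1
  | cons bl T ih =>
    intro hv
    obtain ⟨hbl, hblv⟩ := hv.2 bl (by simp)
    cases T with
    | nil =>
      rw [jl_single]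
      refine ⟨?_, ?_, ?_⟩
      · intro t ht
        rcases List.mem_append.1 ht with ht | ht
        · exact hblv t ht
        · simp at ht; subst ht; rw [WT.valid]; trivial
      · have : bl.length ≠ 0 := fun h => hbl (List.length_eq_zero_iff.1 h)
        simp; omega
      · rw [sL_append, letters_cons]
        have e1 : sL [WT.lf] = 1 := by simp [sL]; rw [WT.leaves]
        rw [e1]
        simp [JE.letters, sL]
    | cons c T' =>
      have hTv : JE.valid (c :: T') := JE.valid_tail hv (by simp)
      obtain ⟨ih1, ih2, ih3⟩ := ih hTv
      rw [jl_cons _ _ (by simp)]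
      refine ⟨?_, ?_, ?_⟩
      · intro t ht
        rcases List.mem_append.1 ht with ht | ht
        · exact hblv t ht
        · simp at ht; subst ht; rw [WT.valid]; exact ⟨ih2, ih1⟩
      · have : bl.length ≠ 0 := fun h => hbl (List.length_eq_zero_iff.1 h)
        simp; omega
      · rw [sL_append, letters_cons]
        have e1 : sL [WT.nd (jl (c :: T'))] = sL (jl (c :: T')) := by
          simp [sL, WT.leaves_nd]
        rw [e1, ih3]
        omega

theorem jl_inj : ∀ (L L' : JE), L.valid → L'.valid → jl L = jl L' → L = L' := by
  intro L
  induction L with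
  | nil => intro L' hv; exact absurd rfl hv.1
  | cons bl T ih =>
    intro L' hv hv' heq
    cases L' with
    | nil => exact absurd rfl hv'.1
    | cons bl' T' =>
      cases T with
      | nil =>
        cases T' with
        | nil =>
          rw [jl_single, jl_single] at heq
          obtain ⟨h1, _⟩ := List.append_inj' heq rfl
          rw [h1]
        | cons c T'' =>
          rw [jl_single, jl_cons bl' _ (by simp)] at heq
          obtain ⟨_, h2⟩ := List.append_inj' heq rfl
          simp at h2
      | cons c T'' =>
        cases T' with
        | nil =>
          rw [jl_cons bl _ (by simp), jl_single] at heq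
          obtain ⟨_, h2⟩ := List.append_inj' heq rfl
          simp at h2
        | cons c' T''' =>
          rw [jl_cons bl _ (by simp), jl_cons bl' _ (by simp)] at heq
          obtain ⟨h1, h2⟩ := List.append_inj' heq rfl
          simp only [List.cons.injEq, WT.nd.injEq] at h2
          have htv : JE.valid (c :: T'') := JE.valid_tail hv (by simp)
          have htv' : JE.valid (c' :: T''') := JE.valid_tail hv' (by simp)
          have := ih _ htv htv' h2.1
          rw [h1, this]

theorem jl_surj : ∀ (l : List WT), (∀ t ∈ l, t.valid) → 2 ≤ l.length →
    ∃ L : JE, jl L = l ∧ L.valid := by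
  have key : ∀ N (l : List WT), sizeOf l ≤ N → (∀ t ∈ l, t.valid) → 2 ≤ l.length →
      ∃ L : JE, jl L = l ∧ L.valid := by
    intro N
    induction N with
    | zero => intro l h _ _; cases l <;> simp_all
    | succ N ih =>
      intro l hs hv hlen
      have hne : l ≠ [] := by intro h; subst h; simp at hlen
      rcases List.eq_nil_or_concat' l with rfl | ⟨l₀, e, rfl⟩
      · simp at hlen
      have hl₀ : l₀ ≠ [] := by
        intro h; subst h; simp at hlen
      have hl₀v : ∀ t ∈ l₀, t.valid := fun t ht => hv t (by simp [ht])
      cases e with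
      | lf =>
        refine ⟨[l₀], by rw [jl_single], by simp, ?_⟩
        intro bl hbl
        simp at hbl; subst hbl
        exact ⟨hl₀, hl₀v⟩
      | nd m =>
        have hev : (WT.nd m).valid := hv _ (by simp)
        rw [WT.valid] at hev
        obtain ⟨hmlen, hmv⟩ := hev
        have hszm : sizeOf m ≤ N := by
          have h1 : sizeOf (WT.nd m) < sizeOf (l₀ ++ [WT.nd m]) :=
            List.sizeOf_lt_of_mem (by simp)
          simp only [WT.nd.sizeOf_spec] at h1
          omega
        obtain ⟨L', hL'e, hL'v⟩ := ih m hszm hmv hmlen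
        refine ⟨l₀ :: L', ?_, ?_, ?_⟩
        · rw [jl_cons _ _ hL'v.1, hL'e]
        · simp
        · intro bl hbl
          rcases List.mem_cons.1 hbl with rfl | hbl
          · exact ⟨hl₀, hl₀v⟩
          · exact hL'v.2 bl hbl
  exact fun l => key (sizeOf l) l le_rfl

/-- single-tree bounds helper -/
theorem ivs_bounds1 {t : WT} (hv : t.valid) {s : ℕ} {p : ℕ × ℕ} (hp : p ∈ WT.ivs t s) :
    s ≤ p.1 ∧ p.1 < p.2 ∧ p.2 + 1 ≤ s + t.leaves := by
  have h : p ∈ ivsL [t] s := by rw [ivsL_cons]; simp [hp]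
  have := ivsL_bounds [t] (by simpa using hv) s p h
  rw [sL_cons, sL] at this
  simpa using this

theorem head_leaves_le {t t' : WT} {ts ts' : List WT} {s : ℕ}
    (hv : ∀ u ∈ t :: ts, u.valid) (hv' : ∀ u ∈ t' :: ts', u.valid)
    (hsub : ∀ q ∈ ivsL (t' :: ts') s, q ∈ ivsL (t :: ts) s) :
    t'.leaves ≤ t.leaves := by
  by_contra hlt
  push_neg at hlt
  cases t' with
  | lf =>
    have := leaves_pos t (hv t (by simp))
    rw [WT.leaves] at hlt
    omega
  | nd m' =>
    have hv'' := hv' _ List.mem_cons_self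
    rw [WT.valid] at hv''
    obtain ⟨hlen', hall'⟩ := hv''
    have h2 := sL_ge2 m' hall' hlen'
    have hr : ((s, s + sL m' - 1) : ℕ × ℕ) ∈ ivsL (WT.nd m' :: ts') s := by
      rw [ivsL_cons, ivs_nd]; simp
    have hr2 := hsub _ hr
    rw [ivsL_cons, List.mem_append] at hr2
    rw [WT.leaves_nd] at hlt
    rcases hr2 with hr2 | hr2
    · have := ivs_bounds1 (hv t (by simp)) hr2
      simp at this
      omega
    · have := (ivsL_bounds ts (fun u hu => hv u (by simp [hu])) _ _ hr2).1
      have := leaves_pos t (hv t (by simp))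
      dsimp only at *
      omega

theorem ivsL_inj : ∀ (l l' : List WT), (∀ t ∈ l, t.valid) → (∀ t ∈ l', t.valid) →
    sL l = sL l' → ∀ s, (∀ q, q ∈ ivsL l s ↔ q ∈ ivsL l' s) → l = l' := by
  have key : ∀ N (l l' : List WT), sizeOf l ≤ N → (∀ t ∈ l, t.valid) → (∀ t ∈ l', t.valid) →
      sL l = sL l' → ∀ s, (∀ q, q ∈ ivsL l s ↔ q ∈ ivsL l' s) → l = l' := by
    intro N
    induction N with
    | zero => intro l l' h _ _ _ _ _; cases l <;> simp_all
    | succ N ih =>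
      intro l l' hs hv hv' hsl s hiff
      match l, l' with
      | [], [] => rfl
      | [], t' :: ts' =>
        exfalso
        have := leaves_pos t' (hv' t' (by simp))
        rw [sL_cons] at hsl
        simp [sL] at hsl
        omega
      | t :: ts, [] =>
        exfalso
        have := leaves_pos t (hv t (by simp))
        rw [sL_cons] at hsl
        simp [sL] at hsl
        omega
      | t :: ts, t' :: ts' =>
        have hlam : t.leaves = t'.leaves :=
          le_antisymm
            (head_leaves_le hv' hv (fun q hq => (hiff q).1 hq))
            (head_leaves_le hv hv' (fun q hq => (hiff q).2 hq))
        have htv : t.valid := hv t (by simp)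
        have htv' : t'.valid := hv' t' (by simp)
        have htsv : ∀ u ∈ ts, u.valid := fun u hu => hv u (by simp [hu])
        have htsv' : ∀ u ∈ ts', u.valid := fun u hu => hv' u (by simp [hu])
        -- split the membership iff
        have hiff1 : ∀ q, q ∈ WT.ivs t s ↔ q ∈ WT.ivs t' s := by
          intro q
          constructor
          · intro hq
            have hb := ivs_bounds1 htv hq
            have : q ∈ ivsL (t' :: ts') s := (hiff q).1 (by rw [ivsL_cons]; simp [hq])
            rw [ivsL_cons, List.mem_append] at this
            rcases this with h | h
            · exact h
            · exfalso
              have := (ivsL_bounds ts' htsv' _ _ h).1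
              rw [← hlam] at this
              omega
          · intro hq
            have hb := ivs_bounds1 htv' hq
            have : q ∈ ivsL (t :: ts) s := (hiff q).2 (by rw [ivsL_cons]; simp [hq])
            rw [ivsL_cons, List.mem_append] at this
            rcases this with h | h
            · exact h
            · exfalso
              have := (ivsL_bounds ts htsv _ _ h).1
              rw [hlam] at this
              omega
        have hiff2 : ∀ q, q ∈ ivsL ts (s + t.leaves) ↔ q ∈ ivsL ts' (s + t.leaves) := by
          intro q
          constructor
          · intro hq
            have hb := (ivsL_bounds ts htsv _ _ hq).1
            have : q ∈ ivsL (t' :: ts') s := (hiff q).1 (by rw [ivsL_cons]; simp [hq])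
            rw [ivsL_cons, List.mem_append] at this
            rcases this with h | h
            · exfalso
              have := (ivs_bounds1 htv' h).2.2
              have := (ivsL_bounds ts htsv _ _ hq).2.1
              rw [← hlam] at *
              omega
            · rwa [← hlam] at h
          · intro hq
            rw [hlam] at hq
            have hb := (ivsL_bounds ts' htsv' _ _ hq).1
            have : q ∈ ivsL (t :: ts) s := (hiff q).2 (by rw [ivsL_cons]; simp [hq])
            rw [ivsL_cons, List.mem_append] at this
            rcases this with h | h
            · exfalso
              have := (ivs_bounds1 htv h).2.2
              have := (ivsL_bounds ts' htsv' _ _ hq).2.1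
              rw [← hlam] at *
              omega
            · exact h
        -- heads equal
        have hhead : t = t' := by
          cases t with
          | lf =>
            cases t' with
            | lf => rfl
            | nd m' =>
              exfalso
              rw [WT.valid] at htv'
              have := sL_ge2 m' htv'.2 htv'.1
              rw [WT.leaves, WT.leaves_nd] at hlam
              omega
          | nd m =>
            cases t' with
            | lf =>
              exfalso
              rw [WT.valid] at htv
              have := sL_ge2 m htv.2 htv.1
              rw [WT.leaves_nd, WT.leaves] at hlam
              omega
            | nd m' =>
              rw [WT.valid] at htv htv'
              obtain ⟨hml, hmv⟩ := htv
              obtain ⟨hml', hmv'⟩ := htv'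
              have hslm : sL m = sL m' := by
                rw [WT.leaves_nd, WT.leaves_nd] at hlam; exact hlam
              have hiffm : ∀ q, q ∈ ivsL m s ↔ q ∈ ivsL m' s := by
                intro q
                constructor
                · intro hq
                  have := (hiff1 q).1 (by rw [ivs_nd]; simp [hq])
                  rw [ivs_nd, List.mem_cons] at this
                  rcases this with h | h
                  · exfalso
                    have h2 := sL_ge2 m hmv hml
                    subst h
                    rcases ivsL_proper m hmv hml s _ hq with hh | hh <;> simp at hh <;> omega
                  · exact h
                · intro hq
                  have := (hiff1 q).2 (by rw [ivs_nd]; simp [hq])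
                  rw [ivs_nd, List.mem_cons] at this
                  rcases this with h | h
                  · exfalso
                    have h2 := sL_ge2 m' hmv' hml'
                    subst h
                    rcases ivsL_proper m' hmv' hml' s _ hq with hh | hh <;> simp at hh <;> omega
                  · exact h
              have hszm : sizeOf m ≤ N := by
                simp only [List.cons.sizeOf_spec, WT.nd.sizeOf_spec] at hs; omega
              rw [ih m m' hszm hmv hmv' hslm s hiffm]
        have hszts : sizeOf ts ≤ N := by
          simp only [List.cons.sizeOf_spec] at hs; omega
        have hslts : sL ts = sL ts' := by
          rw [sL_cons, sL_cons] at hsl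
          omega
        rw [hhead, ih ts ts' hszts htsv htsv' hslts (s + t.leaves) hiff2]
  exact fun l l' => key (sizeOf l) l l' le_rfl

theorem leaves_lf : WT.lf.leaves = 1 := by rw [WT.leaves]

theorem cover : ∀ (l : List WT) (s : ℕ) (p : ℕ × ℕ), (∀ t ∈ l, t.valid) →
    (∀ q ∈ ivsL l s, Compat p q) → p.1 < s → s ≤ p.2 → p.2 + 1 ≤ s + sL l →
    ∃ m l₂, l = m ++ l₂ ∧ p.2 + 1 = s + sL m := by
  intro l
  induction l with
  | nil =>
    intro s p _ _ _ h1 h2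
    simp [sL] at h2
    omega
  | cons t ts ih =>
    intro s p hv hco hp1 hp2 hp3
    have htv : t.valid := hv t (by simp)
    have hlp := leaves_pos t htv
    have hcov : s + t.leaves ≤ p.2 + 1 := by
      cases t with
      | lf => rw [leaves_lf]; omega
      | nd m =>
        rw [WT.valid] at htv
        obtain ⟨hlen, hall⟩ := htv
        have h2 := sL_ge2 m hall hlen
        have hr : ((s, s + sL m - 1) : ℕ × ℕ) ∈ ivsL (WT.nd m :: ts) s := by
          rw [ivsL_cons, ivs_nd]; simp
        have hc := hco _ hr
        rw [WT.leaves_nd]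
        rcases hc with hc | hc | hc | hc <;> simp at hc <;> omega
    by_cases he : p.2 + 1 = s + t.leaves
    · exact ⟨[t], ts, rfl, by rw [sL_cons, sL]; simpa using he⟩
    · have hts : ∀ u ∈ ts, u.valid := fun u hu => hv u (by simp [hu])
      have hcots : ∀ q ∈ ivsL ts (s + t.leaves), Compat p q := fun q hq =>
        hco q (by rw [ivsL_cons]; simp [hq])
      obtain ⟨m₂, l₂, hts2, hsum⟩ := ih (s + t.leaves) p hts hcots (by omega) (by omega)
        (by rw [sL_cons] at hp3; omega)
      exact ⟨t :: m₂, l₂, by rw [hts2]; rfl, by rw [sL_cons]; omega⟩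

theorem addStep : ∀ (l : List WT) (s : ℕ) (p : ℕ × ℕ), (∀ t ∈ l, t.valid) →
    (∀ q ∈ ivsL l s, Compat p q) → s ≤ p.1 → p.1 < p.2 → p.2 + 1 ≤ s + sL l →
    p ∉ ivsL l s →
    (p.1 = s ∧ p.2 + 1 = s + sL l) ∨
    ∃ l', WAdd (.nd l') (.nd l) ∧ ∀ q, q ∈ ivsL l' s ↔ q = p ∨ q ∈ ivsL l s := by
  have key : ∀ N (l : List WT), sizeOf l ≤ N → ∀ (s : ℕ) (p : ℕ × ℕ), (∀ t ∈ l, t.valid) →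
      (∀ q ∈ ivsL l s, Compat p q) → s ≤ p.1 → p.1 < p.2 → p.2 + 1 ≤ s + sL l →
      p ∉ ivsL l s →
      (p.1 = s ∧ p.2 + 1 = s + sL l) ∨
      ∃ l', WAdd (.nd l') (.nd l) ∧ ∀ q, q ∈ ivsL l' s ↔ q = p ∨ q ∈ ivsL l s := by
    intro N
    induction N with
    | zero => intro l h; cases l <;> simp_all
    | succ N ih =>
      intro l hsz s p hv hco hsp hpp hbd hnp
      match l with
      | [] =>
        exfalso
        simp [sL] at hbd
        omega
      | t :: ts =>
        have htv : t.valid := hv t (by simp)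
        have hlp := leaves_pos t htv
        have hts : ∀ u ∈ ts, u.valid := fun u hu => hv u (by simp [hu])
        have hszts : sizeOf ts ≤ N := by
          simp only [List.cons.sizeOf_spec] at hsz; omega
        by_cases ha : p.2 + 1 ≤ s + t.leaves
        · -- p inside the first child
          cases t with
          | lf => rw [leaves_lf] at ha; omega
          | nd m =>
            rw [WT.valid] at htv
            obtain ⟨hlen, hall⟩ := htv
            have h2 := sL_ge2 m hall hlen
            rw [WT.leaves_nd] at ha hlp
            have hsub : ∀ q, q ∈ ivsL m s → q ∈ ivsL (WT.nd m :: ts) s := by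
              intro q hq; rw [ivsL_cons, ivs_nd]; simp [hq]
            have hszm : sizeOf m ≤ N := by
              simp only [List.cons.sizeOf_spec, WT.nd.sizeOf_spec] at hsz; omega
            have hres := ih m hszm s p hall (fun q hq => hco q (hsub q hq)) hsp hpp ha
              (fun hq => hnp (hsub p hq))
            rcases hres with ⟨he1, he2⟩ | ⟨m', hW, hmem⟩
            · exfalso
              apply hnp
              have hpe : p = (s, s + sL m - 1) := by
                have e1 : p.1 = s := by omega
                have e2 : p.2 = s + sL m - 1 := by omega
                exact Prod.ext (by simp [e1]) (by simp [e2])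
              rw [ivsL_cons, ivs_nd, hpe]
              simp
            · refine Or.inr ⟨WT.nd m' :: ts, by simpa using WAdd.under [] ts hW, ?_⟩
              intro q
              have hle : (WT.nd m').leaves = (WT.nd m).leaves := (WAdd_leaves_ivs hW).1
              have hsl' : sL m' = sL m := by
                rw [WT.leaves_nd, WT.leaves_nd] at hle; exact hle
              rw [ivsL_cons, ivsL_cons, ivs_nd, ivs_nd, hle, hsl']
              simp only [List.mem_append, List.mem_cons]
              rw [hmem q]
              tauto
        · by_cases hb : s + t.leaves ≤ p.1
          · -- p in the tail
            have hcots : ∀ q ∈ ivsL ts (s + t.leaves), Compat p q := fun q hq =>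
              hco q (by rw [ivsL_cons]; simp [hq])
            have hnpts : p ∉ ivsL ts (s + t.leaves) := fun hq =>
              hnp (by rw [ivsL_cons]; simp [hq])
            have hres := ih ts hszts (s + t.leaves) p hts hcots hb hpp
              (by rw [sL_cons] at hbd; omega) hnpts
            rcases hres with ⟨he1, he2⟩ | ⟨ts', hW, hmem⟩
            · -- p is the full span of ts : wrap all of ts
              match ts, he1, he2 with
              | [], he1, he2 => exfalso; simp [sL] at he2; omega
              | [u], he1, he2 =>
                exfalso
                cases u with
                | lf =>
                  have e : sL [WT.lf] = 1 := by simp [sL, leaves_lf]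
                  rw [e] at he2
                  omega
                | nd mu =>
                  apply hnp
                  have hvu := hts (WT.nd mu) (by simp)
                  rw [WT.valid] at hvu
                  have hpe : p = (s + t.leaves, s + t.leaves + sL mu - 1) := by
                    have h2 := sL_ge2 mu hvu.2 hvu.1
                    have e : sL [WT.nd mu] = sL mu := by simp [sL, WT.leaves_nd]
                    rw [e] at he2
                    have e1 : p.1 = s + t.leaves := he1
                    have e2 : p.2 = s + t.leaves + sL mu - 1 := by omega
                    exact Prod.ext (by simp [e1]) (by simp [e2])
                  rw [ivsL_cons, List.mem_append, hpe]
                  right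
                  rw [ivsL_cons, ivs_nd]
                  simp
              | a :: b :: rest, he1, he2 =>
                refine Or.inr ⟨[t, WT.nd (a :: b :: rest)], ?_, ?_⟩
                · have := WAdd.here [t] (a :: b :: rest) [] (by simp) (by simp)
                  simpa using this
                · intro q
                  have hpe : p = (s + t.leaves, s + t.leaves + sL (a :: b :: rest) - 1) := by
                    have h1 := sL_pos (a :: b :: rest) hts (by simp)
                    have e1 : p.1 = s + t.leaves := he1
                    have e2 : p.2 = s + t.leaves + sL (a :: b :: rest) - 1 := by omega
                    exact Prod.ext (by simp [e1]) (by simp [e2])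
                  rw [ivsL_cons, ivsL_cons, ivsL_cons, ivs_nd, ivsL_nil, hpe]
                  simp only [List.mem_append, List.mem_cons, List.append_nil]
                  constructor
                  · rintro (h | h | h) <;> tauto
                  · rintro (h | h | h) <;> tauto
            · refine Or.inr ⟨t :: ts', WAdd_cons t hW, ?_⟩
              intro q
              rw [ivsL_cons, ivsL_cons]
              simp only [List.mem_append]
              rw [hmem q]
              tauto
          · -- p straddles: starts at s, covers a prefix of children
            push_neg at ha hb
            have hp1 : p.1 = s := by
              cases t with
              | lf => rw [leaves_lf] at hb; omega
              | nd m =>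
                rw [WT.valid] at htv
                obtain ⟨hlen, hall⟩ := htv
                have h2 := sL_ge2 m hall hlen
                rw [WT.leaves_nd] at ha hb
                have hr : ((s, s + sL m - 1) : ℕ × ℕ) ∈ ivsL (WT.nd m :: ts) s := by
                  rw [ivsL_cons, ivs_nd]; simp
                have hc := hco _ hr
                rcases hc with hc | hc | hc | hc <;> simp at hc <;> omega
            have hcots : ∀ q ∈ ivsL ts (s + t.leaves), Compat p q := fun q hq =>
              hco q (by rw [ivsL_cons]; simp [hq])
            obtain ⟨m₂, l₂, hts2, hsum⟩ := cover ts (s + t.leaves) p hts hcots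
              (by omega) (by omega) (by rw [sL_cons] at hbd; omega)
            have hm2ne : m₂ ≠ [] := by
              intro h; subst h; simp [sL] at hsum; omega
            cases l₂ with
            | nil =>
              left
              refine ⟨hp1, ?_⟩
              rw [List.append_nil] at hts2
              rw [sL_cons, hts2]
              omega
            | cons c l₂' =>
              refine Or.inr ⟨WT.nd (t :: m₂) :: (c :: l₂'), ?_, ?_⟩
              · have := WAdd.here [] (t :: m₂) (c :: l₂')
                  (by have := List.length_pos_iff.2 hm2ne; simp; omega) (by simp)
                simp only [List.nil_append] at this
                rw [hts2]
                exact this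
              · intro q
                have hpe : p = (s, s + sL (t :: m₂) - 1) := by
                  have e1 : p.1 = s := hp1
                  have e2 : p.2 = s + sL (t :: m₂) - 1 := by rw [sL_cons]; omega
                  exact Prod.ext (by simp [e1]) (by simp [e2])
                rw [hts2, ivsL_cons, ivs_nd, WT.leaves_nd]
                conv_rhs => rw [show t :: (m₂ ++ c :: l₂') = (t :: m₂) ++ (c :: l₂') by simp,
                  ivsL_append]
                rw [hpe]
                simp only [List.mem_append, List.mem_cons, List.cons_append]
  exact fun l => key (sizeOf l) l le_rfl

def jlE (L : JE) : WT := match L with | [] => .lf | _ => .nd (jl L)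

theorem jlE_nil : jlE [] = .lf := rfl
theorem jlE_ne (L : JE) (h : L ≠ []) : jlE L = .nd (jl L) := by
  cases L with
  | nil => exact absurd rfl h
  | cons a L' => rfl

theorem jl_cons_E (bl : List WT) (L : JE) : jl (bl :: L) = bl ++ [jlE L] := by
  cases L with
  | nil => rw [jl_single, jlE_nil]
  | cons a L' => rw [jl_cons _ _ (by simp), jlE_ne _ (by simp)]

theorem JEOp_cons {z w : JE} (c : List WT) (h : JEOp z w) : JEOp (c :: z) (c :: w) := by
  cases h with
  | @domBracket A B u v t t' hW =>
    have := JEOp.domBracket (c :: A) B u v hW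
    simpa using this
  | dotToF A B xs ys hx hy =>
    have := JEOp.dotToF (c :: A) B xs ys hx hy
    simpa using this
  | remDots A B u m v hm =>
    have := JEOp.remDots (c :: A) B u m v hm
    simpa using this

theorem letters_append (A B : JE) : JE.letters (A ++ B) = A.letters + B.letters := by
  simp [JE.letters]

theorem JEOp_valid_letters {z w : JE} (h : JEOp z w) (hv : z.valid) :
    w.valid ∧ w.letters = z.letters := by
  cases h with
  | @domBracket A B u v t t' hW =>
    obtain ⟨hl, hW2⟩ := WAdd_leaves_ivs hW
    constructor
    · refine ⟨by simp, ?_⟩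
      intro bl hbl
      simp only [List.mem_append, List.mem_singleton] at hbl
      rcases hbl with (hbl | hbl) | hbl
      · exact hv.2 bl (by simp [hbl])
      · subst hbl
        obtain ⟨_, htr⟩ := hv.2 (u ++ [t] ++ v) (by simp)
        refine ⟨by simp, ?_⟩
        intro x hx
        simp only [List.mem_append, List.mem_singleton] at hx
        rcases hx with (hx | hx) | hx
        · exact htr x (by simp [hx])
        · subst hx; exact WAdd_valid hW (htr t (by simp))
        · exact htr x (by simp [hx])
      · exact hv.2 bl (by simp [hbl])
    · rw [letters_append, letters_append, letters_append, letters_append]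
      have : sL (u ++ [t'] ++ v) = sL (u ++ [t] ++ v) := by
        simp [sL_append, sL, hl]
      simp [JE.letters, sL] at this ⊢
      omega
  | dotToF A B xs ys hx hy =>
    constructor
    · refine ⟨by simp, ?_⟩
      intro bl hbl
      simp only [List.mem_append, List.mem_cons, List.mem_singleton, List.not_mem_nil,
        or_false] at hbl
      obtain ⟨_, htr⟩ := hv.2 (xs ++ ys) (by simp)
      rcases hbl with (hbl | hbl | hbl) | hbl
      · exact hv.2 bl (by simp [hbl])
      · subst hbl; exact ⟨hx, fun x hxm => htr x (by simp [hxm])⟩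
      · subst hbl; exact ⟨hy, fun x hxm => htr x (by simp [hxm])⟩
      · exact hv.2 bl (by simp [hbl])
    · rw [letters_append, letters_append, letters_append, letters_append]
      simp [JE.letters, sL]
  | remDots A B u m v hm =>
    constructor
    · refine ⟨by simp, ?_⟩
      intro bl hbl
      simp only [List.mem_append, List.mem_singleton] at hbl
      obtain ⟨_, htr⟩ := hv.2 (u ++ m ++ v) (by simp)
      rcases hbl with (hbl | hbl) | hbl
      · exact hv.2 bl (by simp [hbl])
      · subst hbl
        refine ⟨by simp, ?_⟩
        intro x hx
        simp only [List.mem_append, List.mem_singleton] at hx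
        rcases hx with (hx | hx) | hx
        · exact htr x (by simp [hx])
        · subst hx
          rw [WT.valid]
          exact ⟨hm, fun y hy => htr y (by simp [hy])⟩
        · exact htr x (by simp [hx])
      · exact hv.2 bl (by simp [hbl])
    · rw [letters_append, letters_append, letters_append, letters_append]
      simp [JE.letters, sL, WT.leaves_nd]

theorem JEOp_wadd {z w : JE} (h : JEOp z w) : WAdd (.nd (jl w)) (.nd (jl z)) := by
  cases h with
  | @domBracket A B u v t t' hW =>
    induction A with
    | nil =>
      rw [List.nil_append, List.nil_append, List.singleton_append, List.singleton_append, jl_cons_E, jl_cons_E]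
      have := WAdd.under u (v ++ [jlE B]) hW
      simpa [List.append_assoc] using this
    | cons a A' ih =>
      have h2 : WAdd (.nd (jl (a :: (A' ++ [u ++ [t'] ++ v] ++ B))))
          (.nd (jl (a :: (A' ++ [u ++ [t] ++ v] ++ B)))) := by
        rw [jl_cons_E, jl_cons_E, jlE_ne _ (by simp), jlE_ne _ (by simp)]
        simpa using WAdd.under a ([] : List WT) ih
      exact h2
  | dotToF A B xs ys hx hy =>
    induction A with
    | nil =>
      have h1 : 2 ≤ (ys ++ [jlE B]).length := by
        have := List.length_pos_iff.2 hy; simp; omega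
      have h2 : 1 ≤ xs.length + ([] : List WT).length := by
        have := List.length_pos_iff.2 hx; simp; omega
      have h3 : WAdd (.nd (jl (xs :: ys :: B))) (.nd (jl ((xs ++ ys) :: B))) := by
        rw [jl_cons_E xs (ys :: B), jlE_ne (ys :: B) (by simp), jl_cons_E ys B, jl_cons_E]
        simpa [List.append_assoc] using WAdd.here xs (ys ++ [jlE B]) [] h1 h2
      exact h3
    | cons a A' ih =>
      have h2 : WAdd (.nd (jl (a :: (A' ++ [xs, ys] ++ B))))
          (.nd (jl (a :: (A' ++ [xs ++ ys] ++ B)))) := by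
        rw [jl_cons_E, jl_cons_E, jlE_ne _ (by simp), jlE_ne _ (by simp)]
        simpa using WAdd.under a ([] : List WT) ih
      exact h2
  | remDots A B u m v hm =>
    induction A with
    | nil =>
      rw [List.nil_append, List.nil_append, List.singleton_append, List.singleton_append, jl_cons_E, jl_cons_E]
      have h2 : 1 ≤ u.length + (v ++ [jlE B]).length := by simp; omega
      have := WAdd.here u m (v ++ [jlE B]) hm h2
      simpa [List.append_assoc] using this
    | cons a A' ih =>
      have h2 : WAdd (.nd (jl (a :: (A' ++ [u ++ [WT.nd m] ++ v] ++ B))))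
          (.nd (jl (a :: (A' ++ [u ++ m ++ v] ++ B)))) := by
        rw [jl_cons_E, jl_cons_E, jlE_ne _ (by simp), jlE_ne _ (by simp)]
        simpa using WAdd.under a ([] : List WT) ih
      exact h2

theorem concat_eq_concat {α : Type} {x y : List α} {a b : α}
    (h : x ++ [a] = y ++ [b]) : x = y ∧ a = b := by
  have := List.append_inj' h rfl
  simpa using this

theorem WAdd_inv {X Y : WT} (h : WAdd X Y) :
    (∃ l₁ m l₂, 2 ≤ m.length ∧ 1 ≤ l₁.length + l₂.length ∧
      X = .nd (l₁ ++ [.nd m] ++ l₂) ∧ Y = .nd (l₁ ++ m ++ l₂)) ∨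
    (∃ l₁ l₂ a b, WAdd a b ∧ X = .nd (l₁ ++ [a] ++ l₂) ∧ Y = .nd (l₁ ++ [b] ++ l₂)) := by
  cases h with
  | here l₁ m l₂ hm hh => exact Or.inl ⟨l₁, m, l₂, hm, hh, rfl, rfl⟩
  | under l₁ l₂ hh => exact Or.inr ⟨l₁, l₂, _, _, hh, rfl, rfl⟩

theorem WAdd_left_nd {a b : WT} (h : WAdd a b) : ∃ la, a = .nd la := by
  rcases WAdd_inv h with ⟨_,_,_,_,_,hx,_⟩ | ⟨_,_,_,_,_,hx,_⟩ <;> exact ⟨_, hx⟩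

theorem WAdd_not_lf {a : WT} (h : WAdd a .lf) : False := by
  rcases WAdd_inv h with ⟨_, _, _, _, _, _, hY⟩ | ⟨_, _, _, _, _, _, hY⟩ <;>
    exact WT.noConfusion hY

theorem wadd_jeop : ∀ (b : JE) (l' : List WT), WAdd (.nd l') (.nd (jl b)) →
    ∃ w, jl w = l' ∧ w ≠ [] ∧ JEOp b w := by
  intro b
  induction b with
  | nil =>
    intro l' hW
    exfalso
    rcases WAdd_inv hW with ⟨l₁, m, l₂, hm, hlen, hX, hY⟩ | ⟨l₁, l₂, a', b', hab, hX, hY⟩ <;>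
      rw [WT.nd.injEq] at hY <;> rw [jl] at hY
    · have h1 := congrArg List.length hY
      simp at h1
      omega
    · have h1 := congrArg List.length hY
      simp at h1
      have hl₁ : l₁ = [] := List.length_eq_zero_iff.1 (by omega)
      have hl₂ : l₂ = [] := List.length_eq_zero_iff.1 (by omega)
      subst hl₁; subst hl₂
      simp at hY
      exact WAdd_not_lf (hY ▸ hab)
  | cons bl rest ih =>
    intro l' hW
    rcases WAdd_inv hW with ⟨l₁, m, l₂, hm, hlen, hX, hY⟩ | ⟨l₁, l₂, a', b', hab, hX, hY⟩ <;>
      rw [WT.nd.injEq] at hX hY <;> rw [jl_cons_E] at hY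
    · -- here move
      rcases List.eq_nil_or_concat' l₂ with rfl | ⟨l₂', e, rfl⟩
      · -- the bracket includes the last element
        rcases List.eq_nil_or_concat' m with rfl | ⟨m', e, rfl⟩
        · simp at hm
        · have hY' : (l₁ ++ m') ++ [e] = bl ++ [jlE rest] := by rw [hY]; simp
          obtain ⟨hbl, hee⟩ := concat_eq_concat hY'
          have hm' : m' ≠ [] := by
            intro h; subst h; simp at hm
          have hl₁ : l₁ ≠ [] := by
            intro h; subst h; simp at hlen
          refine ⟨l₁ :: m' :: rest, ?_, by simp, ?_⟩
          · rw [jl_cons_E l₁ (m' :: rest), jlE_ne (m' :: rest) (by simp), jl_cons_E m' rest, hX]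
            simp [hee]
          · have := JEOp.dotToF [] rest l₁ m' hl₁ hm'
            simp only [List.nil_append] at this
            rw [hbl] at this
            simpa using this
      · -- the bracket is inside bl : remDots
        have hY' : (l₁ ++ (m ++ l₂')) ++ [e] = bl ++ [jlE rest] := by rw [hY]; simp
        obtain ⟨hbl, hee⟩ := concat_eq_concat hY'
        refine ⟨(l₁ ++ [WT.nd m] ++ l₂') :: rest, ?_, by simp, ?_⟩
        · rw [jl_cons_E, hX, hee]
          simp
        · have := JEOp.remDots [] rest l₁ m l₂' hm
          simp only [List.nil_append] at this
          rw [← List.append_assoc] at hbl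
          rw [hbl] at this
          simpa using this
    · -- under move
      rcases List.eq_nil_or_concat' l₂ with rfl | ⟨l₂', e, rfl⟩
      · -- the move is inside the last element
        rw [List.append_nil] at hY
        obtain ⟨hbl, hee⟩ := concat_eq_concat hY.symm
        cases rest with
        | nil =>
          exfalso
          rw [jlE_nil] at hee
          exact WAdd_not_lf (hee ▸ hab)
        | cons r rest' =>
          rw [jlE_ne _ (by simp)] at hee
          subst hee
          obtain ⟨la, rfl⟩ := WAdd_left_nd hab
          obtain ⟨w', hjw', hw'ne, hop⟩ := ih la hab
          refine ⟨bl :: w', ?_, by simp, ?_⟩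
          · rw [jl_cons_E bl w', jlE_ne _ hw'ne, hjw', hX, hbl]
            simp
          · exact JEOp_cons bl hop
      · -- the move is inside bl : domBracket
        have hY' : (l₁ ++ ([b'] ++ l₂')) ++ [e] = bl ++ [jlE rest] := by rw [hY]; simp
        obtain ⟨hbl, hee⟩ := concat_eq_concat hY'
        refine ⟨(l₁ ++ [a'] ++ l₂') :: rest, ?_, by simp, ?_⟩
        · rw [jl_cons_E, hX, hee]
          simp
        · have := JEOp.domBracket [] rest l₁ l₂' hab
          simp only [List.nil_append] at this
          rw [← List.append_assoc] at hbl
          rw [hbl] at this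
          simpa using this

theorem ivsL_replicate_lf : ∀ (k s : ℕ), ivsL (List.replicate k .lf) s = [] := by
  intro k
  induction k with
  | zero => intro s; rw [List.replicate_zero, ivsL_nil]
  | succ k ihk =>
    intro s
    rw [List.replicate_succ, ivsL_cons, ivs_lf, ihk]
    rfl

theorem sL_replicate_lf (k : ℕ) : sL (List.replicate k .lf) = k := by
  simp [sL, List.map_replicate, leaves_lf]

theorem step_subset {c d : JE} (hv : c.valid) (hop : JEOp c d) :
    ∀ q ∈ ivsL (jl c) 1, q ∈ ivsL (jl d) 1 := by
  have hW := JEOp_wadd hop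
  obtain ⟨hl, hmono⟩ := WAdd_leaves_ivs hW
  obtain ⟨htr, hlen, hsl⟩ := jl_props c hv
  intro q hq
  have hq' : q ∈ WT.ivs (.nd (jl c)) 1 := by rw [ivs_nd]; simp [hq]
  have h2 := hmono 1 q hq'
  rw [ivs_nd, List.mem_cons] at h2
  rcases h2 with h | h
  · exfalso
    have hsld : sL (jl d) = sL (jl c) := by
      rw [WT.leaves_nd, WT.leaves_nd] at hl; exact hl
    rcases ivsL_proper (jl c) htr hlen 1 q hq with hh | hh <;> rw [h] at hh <;>
      simp at hh <;> omega
  · exact h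

theorem le_subset {z w : JE} (h : Relation.ReflTransGen JEOp z w) (hv : z.valid) :
    w.valid ∧ ∀ q ∈ ivsL (jl z) 1, q ∈ ivsL (jl w) 1 := by
  induction h with
  | refl => exact ⟨hv, fun q hq => hq⟩
  | tail hzc hcd ih =>
    obtain ⟨hcv, hsub⟩ := ih
    exact ⟨(JEOp_valid_letters hcd hcv).1,
      fun q hq => step_subset hcv hcd q (hsub q hq)⟩

theorem collapsedMultiplihedron_orderIso_associahedron' (n : ℕ) (hn : 1 ≤ n) :
    ∃ φ : {L : JE // L.valid ∧ L.letters = n} ≃ Bracketing (n + 1),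
      ∀ a b : {L : JE // L.valid ∧ L.letters = n},
        JE.Le a.1 b.1 ↔ (φ b).val ⊆ (φ a).val := by
  classical
  set good := {L : JE // L.valid ∧ L.letters = n} with hgood
  have hbr : ∀ L : good, IsBracketing (n + 1) (ivsL (jl L.1) 1).toFinset := by
    intro ⟨L, hv, hlet⟩
    obtain ⟨htr, hlen, hsl⟩ := jl_props L hv
    rw [hlet] at hsl
    constructor
    · intro p hp
      rw [List.mem_toFinset] at hp
      have hb := ivsL_bounds _ htr 1 p hp
      have hpr := ivsL_proper _ htr hlen 1 p hp
      rw [hsl] at hb hpr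
      refine ⟨by omega, by omega, by omega, ?_⟩
      rintro ⟨h1, h2⟩
      omega
    · intro p hp q hq
      rw [List.mem_toFinset] at hp hq
      exact ivsL_compat _ htr 1 p q hp hq
  set F : good → Bracketing (n + 1) := fun L => ⟨(ivsL (jl L.1) 1).toFinset, hbr L⟩ with hF
  have hinj : Function.Injective F := by
    intro L L' hFe
    have hset : ∀ q, q ∈ ivsL (jl L.1) 1 ↔ q ∈ ivsL (jl L'.1) 1 := by
      intro q
      rw [← List.mem_toFinset, ← List.mem_toFinset]
      rw [show (ivsL (jl L.1) 1).toFinset = (ivsL (jl L'.1) 1).toFinset from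
        congrArg Subtype.val hFe]
    obtain ⟨htr, hlen, hsl⟩ := jl_props L.1 L.2.1
    obtain ⟨htr', hlen', hsl'⟩ := jl_props L'.1 L'.2.1
    have hsleq : sL (jl L.1) = sL (jl L'.1) := by
      rw [hsl, hsl', L.2.2, L'.2.2]
    have := ivsL_inj _ _ htr htr' hsleq 1 hset
    exact Subtype.ext (jl_inj _ _ L.2.1 L'.2.1 this)
  -- surjectivity
  have hsurj : Function.Surjective F := by
    have key : ∀ k (S : Finset (ℕ × ℕ)), S.card = k → IsBracketing (n + 1) S →
        ∃ L : good, (F L).val = S := by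
      intro k
      induction k with
      | zero =>
        intro S hc hS
        rw [Finset.card_eq_zero] at hc
        subst hc
        have hvL : JE.valid [List.replicate n WT.lf] := by
          refine ⟨by simp, ?_⟩
          intro bl hbl
          simp at hbl
          subst hbl
          refine ⟨by
            intro hnil
            have := congrArg List.length hnil
            simp at this
            omega, ?_⟩
          intro t ht
          rw [List.eq_of_mem_replicate ht, WT.valid]
          trivial
        have hlet : JE.letters [List.replicate n WT.lf] = n := by
          have := sL_replicate_lf n
          simp [JE.letters, sL] at this ⊢
          exact this
        refine ⟨⟨[List.replicate n WT.lf], hvL, hlet⟩, ?_⟩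
        show (ivsL (jl [List.replicate n WT.lf]) 1).toFinset = ∅
        rw [jl_single]
        have : List.replicate n WT.lf ++ [WT.lf] = List.replicate (n + 1) WT.lf := by
          rw [← List.replicate_succ']
        rw [this, ivsL_replicate_lf]
        simp
      | succ k ihk =>
        intro S hc hS
        have hne : S.Nonempty := Finset.card_pos.1 (by omega)
        obtain ⟨p, hp⟩ := hne
        have hS' : IsBracketing (n + 1) (S.erase p) :=
          ⟨fun q hq => hS.1 q (Finset.mem_of_mem_erase hq),
           fun q hq r hr => hS.2 q (Finset.mem_of_mem_erase hq) r (Finset.mem_of_mem_erase hr)⟩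
        obtain ⟨L', hL'⟩ := ihk (S.erase p) (by rw [Finset.card_erase_of_mem hp]; omega) hS'
        obtain ⟨htr, hlen, hsl⟩ := jl_props L'.1 L'.2.1
        rw [L'.2.2] at hsl
        have hmemS' : ∀ q, q ∈ ivsL (jl L'.1) 1 ↔ q ∈ S.erase p := by
          intro q
          rw [← List.mem_toFinset]
          rw [show (ivsL (jl L'.1) 1).toFinset = S.erase p from hL']
        have hpb := hS.1 p hp
        have hstep := addStep (jl L'.1) 1 p htr
          (fun q hq => hS.2 p hp q (Finset.mem_of_mem_erase ((hmemS' q).1 hq)))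
          (by omega) (by omega) (by omega)
          (fun hq => (Finset.notMem_erase p S) ((hmemS' p).1 hq))
        rcases hstep with ⟨h1, h2⟩ | ⟨l'', hW, hmem⟩
        · exfalso
          rw [hsl] at h2
          exact hpb.2.2.2 ⟨by omega, by omega⟩
        · obtain ⟨w, hjw, hwne, hop⟩ := wadd_jeop L'.1 l'' hW
          obtain ⟨hwv, hwlet⟩ := JEOp_valid_letters hop L'.2.1
          refine ⟨⟨w, hwv, by rw [hwlet, L'.2.2]⟩, ?_⟩
          show (ivsL (jl w) 1).toFinset = S
          ext q
          rw [List.mem_toFinset, hjw, hmem q, hmemS' q]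
          constructor
          · rintro (rfl | hq)
            · exact hp
            · exact Finset.mem_of_mem_erase hq
          · intro hq
            by_cases hqp : q = p
            · exact Or.inl hqp
            · exact Or.inr (Finset.mem_erase.2 ⟨hqp, hq⟩)
    intro S
    exact key S.val.card S.val rfl S.2 |>.imp fun L hL => Subtype.ext hL
  refine ⟨Equiv.ofBijective F ⟨hinj, hsurj⟩, ?_⟩
  intro a b
  constructor
  · intro h
    have := le_subset h b.2.1
    intro q hq
    exact List.mem_toFinset.2 (this.2 q (List.mem_toFinset.1 hq))
  · intro hsub
    show Relation.ReflTransGen JEOp b.1 a.1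
    have key : ∀ k (b : good), (F a).val.card - (F b).val.card ≤ k →
        (F b).val ⊆ (F a).val → Relation.ReflTransGen JEOp b.1 a.1 := by
      intro k
      induction k with
      | zero =>
        intro b hk hsub2
        have hcard : (F a).val.card ≤ (F b).val.card := by omega
        have : F b = F a := Subtype.ext (Finset.eq_of_subset_of_card_le hsub2 hcard)
        rw [hinj this]
      | succ k ihk =>
        intro b hk hsub2
        by_cases heq : (F b).val = (F a).val
        · rw [hinj (Subtype.ext heq)]
        · have hss : (F b).val ⊂ (F a).val := ssubset_of_subset_of_ne hsub2 heq
          obtain ⟨p, hpa, hpb⟩ := Finset.exists_of_ssubset hss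
          obtain ⟨htr, hlen, hsl⟩ := jl_props b.1 b.2.1
          rw [b.2.2] at hsl
          have hmemb : ∀ q, q ∈ ivsL (jl b.1) 1 ↔ q ∈ (F b).val := fun q =>
            (List.mem_toFinset).symm
          have hpbr := (hbr a).1 p hpa
          have hstep := addStep (jl b.1) 1 p htr
            (fun q hq => (hbr a).2 p hpa q (hsub2 ((hmemb q).1 hq)))
            (by omega) (by omega) (by omega)
            (fun hq => hpb ((hmemb p).1 hq))
          rcases hstep with ⟨h1, h2⟩ | ⟨l'', hW, hmem⟩
          · exfalso
            rw [hsl] at h2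
            exact hpbr.2.2.2 ⟨by omega, by omega⟩
          · obtain ⟨w, hjw, hwne, hop⟩ := wadd_jeop b.1 l'' hW
            obtain ⟨hwv, hwlet⟩ := JEOp_valid_letters hop b.2.1
            set wg : good := ⟨w, hwv, by rw [hwlet, b.2.2]⟩ with hwg
            have hFw : (F wg).val = insert p (F b).val := by
              ext q
              show q ∈ (ivsL (jl w) 1).toFinset ↔ _
              rw [List.mem_toFinset, hjw, hmem q, Finset.mem_insert, hmemb q]
            have hwsub : (F wg).val ⊆ (F a).val := by
              rw [hFw]
              intro q hq
              rcases Finset.mem_insert.1 hq with rfl | hq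
              · exact hpa
              · exact hsub2 hq
            have hwcard : (F wg).val.card = (F b).val.card + 1 := by
              rw [hFw, Finset.card_insert_of_notMem]
              intro hc
              exact hpb hc
            have hklt : (F a).val.card - (F wg).val.card ≤ k := by
              have := Finset.card_lt_card hss
              omega
            exact Relation.ReflTransGen.head hop (ihk wg hklt hwsub)
    exact key ((F a).val.card - (F b).val.card) b le_rfl hsub


end AuxCollapsed

/-- The order-preserving bijection `φ` between the poset `𝔍'_n` underlying the
collapsed multiplihedron `J'_n` and the poset `𝔓(n+1)` of bracketings of a word
with `n+1` letters (ordered by `p ≤ p'` iff `p ⊇ p'` as sets of parenthesis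
pairs); consequently `J'_n` is combinatorially isomorphic to the associahedron
`K_{n+1}`. -/
theorem collapsedMultiplihedron_orderIso_associahedron (n : ℕ) (hn : 1 ≤ n) :
    ∃ φ : {L : JE // L.valid ∧ L.letters = n} ≃ Bracketing (n + 1),
      ∀ a b : {L : JE // L.valid ∧ L.letters = n},
        JE.Le a.1 b.1 ↔ (φ b).val ⊆ (φ a).val := by
  exact collapsedMultiplihedron_orderIso_associahedron' n hn
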